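/- arXiv:2602.20388 — 3 statements merged into one kernel-verified Lean document; each statement's English description precedes it below -/
import Mathlib

section
/- Let V be a finite-dimensional real vector space, Π : V* → V skew-symmetric, W = im Π, and ω the induced symplectic form on W defined by ω(Π α, Π β) = −α(Π β). Then for every subspace C ⊆ V one has Π(C°) = (C ∩ W)^{ω}, where (C ∩ W)^{ω} = {w ∈ W : ω(w, v) = 0 for all v ∈ C ∩ W} is the ω-orthogonal of C ∩ W inside W, and C° is the annihilator of C in V*. -/
/-!
Both sides lie in `W`, and the inclusion `Π(C°) ⊆ (C ∩ W)^ω` is immediate from the formula for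
`ω`. For the converse, skew-symmetry shows that the annihilator of `Π(C°)` is `Π⁻¹(C)`, so that
`Π(C°) = Π⁻¹(C)°` by biduality of subspaces. Finally `γ (Π α) = -α (Π γ) = ω (Π α) (Π γ)`, so
`Π α` is killed by `Π⁻¹(C)` exactly when it is `ω`-orthogonal to `C ∩ W`.
-/

namespace Submodule

variable {K V : Type*} [Field K] [AddCommGroup V] [Module K V]
  {Pi : Module.Dual K V →ₗ[K] V} (hskew : ∀ α β : Module.Dual K V, β (Pi α) = -α (Pi β))
include hskew

theorem dualAnnihilator_map_dualAnnihilator_eq_comap (C : Submodule K V) :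
    (C.dualAnnihilator.map Pi).dualAnnihilator = C.comap Pi := by
  ext γ
  conv_rhs => rw [mem_comap, ← Subspace.dualAnnihilator_dualCoannihilator_eq (W := C)]
  simp only [mem_dualAnnihilator, mem_map, mem_dualCoannihilator, forall_exists_index, and_imp,
    forall_apply_eq_imp_iff₂]
  refine forall₂_congr fun δ _ => ?_
  rw [hskew δ γ, neg_eq_zero]

theorem map_dualAnnihilator_eq_dualCoannihilator_comap (C : Submodule K V) :
    C.dualAnnihilator.map Pi = (C.comap Pi).dualCoannihilator := by
  rw [← dualAnnihilator_map_dualAnnihilator_eq_comap hskew,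
    Subspace.dualAnnihilator_dualCoannihilator_eq]

theorem apply_mem_map_dualAnnihilator_iff (C : Submodule K V) (α : Module.Dual K V) :
    Pi α ∈ C.dualAnnihilator.map Pi ↔ ∀ γ, Pi γ ∈ C → α (Pi γ) = 0 := by
  rw [map_dualAnnihilator_eq_dualCoannihilator_comap hskew, mem_dualCoannihilator]
  refine forall₂_congr fun γ _ => ?_
  rw [hskew α γ, neg_eq_zero]

end Submodule

theorem image_annihilator_eq_symplectic_orthogonal_general
    (V : Type*) [AddCommGroup V] [Module ℝ V]
    (Pi : Module.Dual ℝ V →ₗ[ℝ] V)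
    (hskew : ∀ α β : Module.Dual ℝ V, β (Pi α) = -α (Pi β))
    (ω : V → V → ℝ)
    (hω : ∀ α β : Module.Dual ℝ V, ω (Pi α) (Pi β) = -α (Pi β))
    (C : Submodule ℝ V) :
    Pi '' {α : Module.Dual ℝ V | ∀ x ∈ C, α x = 0}
      = {w : V | w ∈ LinearMap.range Pi ∧
          ∀ v : V, v ∈ C → v ∈ LinearMap.range Pi → ω w v = 0} := by
  ext w
  constructor
  · rintro ⟨α, hα, rfl⟩
    refine ⟨⟨α, rfl⟩, ?_⟩
    rintro v hvC ⟨β, rfl⟩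
    rw [hω, hα _ hvC, neg_zero]
  · rintro ⟨⟨α, rfl⟩, hperp⟩
    have hmem : Pi α ∈ C.dualAnnihilator.map Pi :=
      (Submodule.apply_mem_map_dualAnnihilator_iff hskew C α).2 fun γ hγ => by
        simpa [hω] using hperp _ hγ ⟨γ, rfl⟩
    obtain ⟨β, hβ, hβα⟩ := hmem
    exact ⟨β, (Submodule.mem_dualAnnihilator β).1 hβ, hβα⟩

/-- For a skew-symmetric `Π : V* → V` with `W = im Π` and induced symplectic form
`ω` on `W` (given by `ω(Π α, Π β) = -α(Π β)`), for every subspace `C ⊆ V` one has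
`Π(C°) = (C ∩ W)^ω`, the `ω`-orthogonal of `C ∩ W` inside `W`. -/
theorem image_annihilator_eq_symplectic_orthogonal
    (V : Type*) [AddCommGroup V] [Module ℝ V] [FiniteDimensional ℝ V]
    (Pi : Module.Dual ℝ V →ₗ[ℝ] V)
    (hskew : ∀ α β : Module.Dual ℝ V, β (Pi α) = -α (Pi β))
    (ω : V → V → ℝ)
    (hω : ∀ α β : Module.Dual ℝ V, ω (Pi α) (Pi β) = -α (Pi β))
    (C : Submodule ℝ V) :
    Pi '' {α : Module.Dual ℝ V | ∀ x ∈ C, α x = 0}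
      = {w : V | w ∈ LinearMap.range Pi ∧
          ∀ v : V, v ∈ C → v ∈ LinearMap.range Pi → ω w v = 0} :=
  image_annihilator_eq_symplectic_orthogonal_general V Pi hskew ω hω C
end

section
/- Let V be a finite-dimensional real vector space, Π : V* → V skew-symmetric, W = im Π, and ω the induced symplectic form on W. A subspace C ⊆ V satisfies Π(C°) ⊆ C (i.e. C is coisotropic for Π) if and only if the subspace C ∩ W of the symplectic vector space (W, ω) is coisotropic in the symplectic sense, i.e. (C ∩ W)^{ω} ⊆ C ∩ W. -/
/-!
Write `W = range Π`. The vector `Π α ∈ W` is `ω`-orthogonal to `C ∩ W` exactly when `α`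
annihilates `C ∩ W`, and `(C ∩ W)° = C° + W°`. Skew-symmetry gives `W° ⊆ ker Π`, so
`Π((C ∩ W)°) = Π(C°)`: the symplectic orthogonal of `C ∩ W` is `Π(C°)`, and both conditions
say that it lies in `C`.
-/

open Module Submodule LinearMap

section

variable {K V : Type*} [Field K] [AddCommGroup V] [Module K V] {Pi : Dual K V →ₗ[K] V}

theorem dualAnnihilator_range_le_ker_of_skew (hskew : ∀ α β : Dual K V, β (Pi α) = -α (Pi β)) :
    (range Pi).dualAnnihilator ≤ ker Pi := by
  intro β hβ
  rw [mem_ker, ← forall_dual_apply_eq_zero_iff K]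
  intro φ
  rw [hskew, (mem_dualAnnihilator β).1 hβ _ (mem_range_self Pi φ), neg_zero]

theorem map_dualAnnihilator_inf_range_of_skew (hskew : ∀ α β : Dual K V, β (Pi α) = -α (Pi β))
    (C : Submodule K V) :
    (C ⊓ range Pi).dualAnnihilator.map Pi = C.dualAnnihilator.map Pi := by
  rw [Subspace.dualAnnihilator_inf_eq, Submodule.map_sup,
    le_ker_iff_map.1 (dualAnnihilator_range_le_ker_of_skew hskew), sup_bot_eq]

theorem forall_inf_range_apply_eq_zero_iff_mem_dualAnnihilator (ω : V → V → K)
    (hω : ∀ α β : Dual K V, ω (Pi α) (Pi β) = -α (Pi β)) (C : Submodule K V) (α : Dual K V) :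
    (∀ v ∈ C, v ∈ range Pi → ω (Pi α) v = 0) ↔ α ∈ (C ⊓ range Pi).dualAnnihilator := by
  simp only [mem_dualAnnihilator, mem_inf, and_imp, mem_range, forall_exists_index]
  refine forall₂_congr fun v _ ↦ forall_congr' fun β ↦ ?_
  exact imp_congr_right fun hβ ↦ by rw [← hβ, hω, neg_eq_zero]

end

theorem coisotropic_iff_symplectically_coisotropic_in_leaf_general
    (V : Type*) [AddCommGroup V] [Module ℝ V]
    (Pi : Module.Dual ℝ V →ₗ[ℝ] V)
    (hskew : ∀ α β : Module.Dual ℝ V, β (Pi α) = -α (Pi β))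
    (ω : V → V → ℝ)
    (hω : ∀ α β : Module.Dual ℝ V, ω (Pi α) (Pi β) = -α (Pi β))
    (C : Submodule ℝ V) :
    (∀ α : Module.Dual ℝ V, (∀ x ∈ C, α x = 0) → Pi α ∈ C)
      ↔ (∀ w : V, w ∈ LinearMap.range Pi →
          (∀ v : V, v ∈ C → v ∈ LinearMap.range Pi → ω w v = 0) →
          (w ∈ C ∧ w ∈ LinearMap.range Pi)) := by
  calc (∀ α : Dual ℝ V, (∀ x ∈ C, α x = 0) → Pi α ∈ C)
      ↔ C.dualAnnihilator.map Pi ≤ C := by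
        rw [map_le_iff_le_comap, SetLike.le_def]
        simp only [mem_comap, mem_dualAnnihilator]
    _ ↔ (C ⊓ range Pi).dualAnnihilator.map Pi ≤ C := by
        rw [map_dualAnnihilator_inf_range_of_skew hskew]
    _ ↔ ∀ α : Dual ℝ V, (∀ v ∈ C, v ∈ range Pi → ω (Pi α) v = 0) → Pi α ∈ C := by
        rw [map_le_iff_le_comap, SetLike.le_def]
        simp only [mem_comap, forall_inf_range_apply_eq_zero_iff_mem_dualAnnihilator ω hω]
    _ ↔ _ := by
        simp only [mem_range, forall_exists_index, forall_apply_eq_imp_iff, exists_apply_eq_apply,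
          and_true]

/-- For a skew-symmetric `Π : V* → V` with `W = im Π` and induced symplectic form
`ω` on `W`, a subspace `C ⊆ V` is coisotropic for `Π` (i.e. `Π(C°) ⊆ C`) if and
only if `C ∩ W` is coisotropic in the symplectic sense inside `(W, ω)`, i.e.
`(C ∩ W)^ω ⊆ C ∩ W`. -/
theorem coisotropic_iff_symplectically_coisotropic_in_leaf
    (V : Type*) [AddCommGroup V] [Module ℝ V] [FiniteDimensional ℝ V]
    (Pi : Module.Dual ℝ V →ₗ[ℝ] V)
    (hskew : ∀ α β : Module.Dual ℝ V, β (Pi α) = -α (Pi β))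
    (ω : V → V → ℝ)
    (hω : ∀ α β : Module.Dual ℝ V, ω (Pi α) (Pi β) = -α (Pi β))
    (C : Submodule ℝ V) :
    (∀ α : Module.Dual ℝ V, (∀ x ∈ C, α x = 0) → Pi α ∈ C)
      ↔ (∀ w : V, w ∈ LinearMap.range Pi →
          (∀ v : V, v ∈ C → v ∈ LinearMap.range Pi → ω w v = 0) →
          (w ∈ C ∧ w ∈ LinearMap.range Pi)) :=
  coisotropic_iff_symplectically_coisotropic_in_leaf_general V Pi hskew ω hω C
end

section
/- Let W and V be finite-dimensional real vector spaces, μ : W → V a surjective linear map, Π_W : W* → W a skew-symmetric isomorphism (a linear symplectic structure on W), and define Π_V := μ ∘ Π_W ∘ μ* : V* → V, where μ* is the transpose of μ. Then for every subspace C ⊆ V, C is coisotropic for Π_V (i.e. Π_V(C°) ⊆ C) if and only if μ^{-1}(C) is coisotropic for Π_W (i.e. Π_W((μ^{-1}C)°) ⊆ μ^{-1}(C)). -/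
/-!
Surjectivity of `μ` gives `(μ⁻¹ C)° = μ* (C°)`, hence `Π_V (C°) = μ (Π_W ((μ⁻¹ C)°))`, and a set
lies in `C` after applying `μ` exactly when it lies in `μ⁻¹ C`.
-/

open Module

namespace Submodule

variable {R W V : Type*} [CommRing R] [AddCommGroup W] [Module R W] [AddCommGroup V] [Module R V]

theorem dualAnnihilator_comap_eq_map_dualMap {μ : W →ₗ[R] V}
    (hμ : Function.Surjective μ) (C : Submodule R V) :
    (C.comap μ).dualAnnihilator = C.dualAnnihilator.map μ.dualMap := by
  refine le_antisymm (fun β hβ => ?_) (dualAnnihilator_map_dualMap_le C μ)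
  have hker : β ∈ (LinearMap.ker μ).dualAnnihilator :=
    dualAnnihilator_anti (comap_mono bot_le) hβ
  rw [← LinearMap.range_dualMap_eq_dualAnnihilator_ker_of_surjective μ hμ] at hker
  obtain ⟨α, rfl⟩ := hker
  refine ⟨α, (mem_dualAnnihilator α).2 fun x hx => ?_, rfl⟩
  obtain ⟨w, rfl⟩ := hμ x
  exact (mem_dualAnnihilator _).1 hβ w hx

def IsCoisotropic (P : Dual R V →ₗ[R] V) (C : Submodule R V) : Prop :=
  C.dualAnnihilator.map P ≤ C

theorem isCoisotropic_iff (P : Dual R V →ₗ[R] V) (C : Submodule R V) :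
    C.IsCoisotropic P ↔ ∀ α : Dual R V, (∀ x ∈ C, α x = 0) → P α ∈ C := by
  rw [IsCoisotropic, Submodule.map_le_iff_le_comap]
  simp only [SetLike.le_def, mem_comap, mem_dualAnnihilator]

theorem isCoisotropic_comp_dualMap_iff {μ : W →ₗ[R] V}
    (hμ : Function.Surjective μ) (P : Dual R W →ₗ[R] W) (C : Submodule R V) :
    C.IsCoisotropic (μ ∘ₗ P ∘ₗ μ.dualMap) ↔ (C.comap μ).IsCoisotropic P := by
  rw [IsCoisotropic, IsCoisotropic, dualAnnihilator_comap_eq_map_dualMap hμ, map_comp, map_comp,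
    Submodule.map_le_iff_le_comap]

end Submodule

open Submodule

theorem coisotropic_iff_preimage_coisotropic_realization_general
    (W V : Type*) [AddCommGroup W] [Module ℝ W]
    [AddCommGroup V] [Module ℝ V]
    (μ : W →ₗ[ℝ] V) (hμ : Function.Surjective μ)
    (PiW : Module.Dual ℝ W →ₗ[ℝ] W)
    (PiV : Module.Dual ℝ V →ₗ[ℝ] V)
    (hPiV : PiV = μ ∘ₗ PiW ∘ₗ μ.dualMap)
    (C : Submodule ℝ V) :
    (∀ α : Module.Dual ℝ V, (∀ x ∈ C, α x = 0) → PiV α ∈ C)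
      ↔ (∀ β : Module.Dual ℝ W,
          (∀ w ∈ C.comap μ, β w = 0) → PiW β ∈ C.comap μ) := by
  rw [← isCoisotropic_iff, ← isCoisotropic_iff, hPiV]
  exact isCoisotropic_comp_dualMap_iff hμ PiW C

/-- Let `μ : W → V` be a surjective linear map, `Π_W : W* → W` a skew-symmetric
isomorphism (a linear symplectic structure on `W`), and `Π_V = μ ∘ Π_W ∘ μ*`.
Then a subspace `C ⊆ V` is coisotropic for `Π_V` iff `μ⁻¹(C)` is coisotropic
for `Π_W`. -/
theorem coisotropic_iff_preimage_coisotropic_realization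
    (W V : Type*) [AddCommGroup W] [Module ℝ W] [FiniteDimensional ℝ W]
    [AddCommGroup V] [Module ℝ V] [FiniteDimensional ℝ V]
    (μ : W →ₗ[ℝ] V) (hμ : Function.Surjective μ)
    (PiW : Module.Dual ℝ W →ₗ[ℝ] W)
    (hskewW : ∀ α β : Module.Dual ℝ W, β (PiW α) = -α (PiW β))
    (hbij : Function.Bijective PiW)
    (PiV : Module.Dual ℝ V →ₗ[ℝ] V)
    (hPiV : PiV = μ ∘ₗ PiW ∘ₗ μ.dualMap)
    (C : Submodule ℝ V) :
    (∀ α : Module.Dual ℝ V, (∀ x ∈ C, α x = 0) → PiV α ∈ C)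
      ↔ (∀ β : Module.Dual ℝ W,
          (∀ w ∈ C.comap μ, β w = 0) → PiW β ∈ C.comap μ) :=
  coisotropic_iff_preimage_coisotropic_realization_general W V μ hμ PiW PiV hPiV C
end
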